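/- Let x : {0,...,t} → ℤ be a path with x 0 = 0 and steps in {-1,0,1}, let K = min_{0 ≤ i ≤ t} x i, and for each r with K ≤ r ≤ x t define the path s^r by s^r_j = 2*(min(r, K_j) - K) - x j where K_j = min_{j ≤ i ≤ t} x i. Then for every j ∈ {0,...,t}: max_{0 ≤ i ≤ j} (s^r_i + K)_+ = min(r, K_j) - K. -/
import Mathlib


/-- Running maximum `max_{0 ≤ i ≤ j} f i`. -/
noncomputable def runMax (f : ℕ → ℤ) (j : ℕ) : ℤ :=
  (Finset.range (j + 1)).sup' (Finset.nonempty_range_iff.mpr (Nat.succ_ne_zero j)) f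

/-- Backward running minimum `K_j(x) = min_{j ≤ i ≤ t} x i` (for `j ≤ t`). -/
noncomputable def backMin (x : ℕ → ℤ) (t j : ℕ) : ℤ :=
  (Finset.Icc (min j t) t).inf' (Finset.nonempty_Icc.mpr (min_le_right j t)) x

/-- `x ∈ C⟦0,t⟧`: `x 0 = 0` and steps in `{-1,0,1}` up to time `t`. -/
def IsPath (t : ℕ) (x : ℕ → ℤ) : Prop :=
  x 0 = 0 ∧ ∀ j : ℕ, 1 ≤ j → j ≤ t → x j - x (j - 1) ∈ ({-1, 0, 1} : Set ℤ)

/-- The path `s^r_j = 2*(min(r, K_j(x)) - K) - x j`, where `K = K_0(x)`. -/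
noncomputable def sr (x : ℕ → ℤ) (t : ℕ) (r : ℤ) (j : ℕ) : ℤ :=
  2 * (min r (backMin x t j) - backMin x t 0) - x j

lemma backMin_le (x : ℕ → ℤ) (t : ℕ) {j i : ℕ} (hji : j ≤ i) (hit : i ≤ t) :
    backMin x t j ≤ x i := by
  apply Finset.inf'_le
  simp only [Finset.mem_Icc]
  exact ⟨le_trans (min_le_left j t) hji, hit⟩

lemma le_backMin {x : ℕ → ℤ} {t j : ℕ} {c : ℤ} (hjt : j ≤ t)
    (h : ∀ i, j ≤ i → i ≤ t → c ≤ x i) : c ≤ backMin x t j := by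
  apply Finset.le_inf'
  intro i hi
  rw [Finset.mem_Icc, min_eq_left hjt] at hi
  exact h i hi.1 hi.2

lemma backMin_mono (x : ℕ → ℤ) {t i j : ℕ} (hij : i ≤ j) (hjt : j ≤ t) :
    backMin x t i ≤ backMin x t j :=
  le_backMin hjt (fun k hk1 hk2 => backMin_le x t (hij.trans hk1) hk2)

/-- For a path `x ∈ C⟦0,t⟧`, `K = min_{0 ≤ i ≤ t} x i`, and `K ≤ r ≤ x t`:
`max_{0 ≤ i ≤ j} (s^r_i + K)₊ = min(r, K_j) - K` for every `j ≤ t`. -/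
theorem runMax_pos_part_sr (t : ℕ) (x : ℕ → ℤ) (hx : IsPath t x)
    (r : ℤ) (hr1 : backMin x t 0 ≤ r) (hr2 : r ≤ x t) :
    ∀ j ≤ t,
      runMax (fun i => max (sr x t r i + backMin x t 0) 0) j
        = min r (backMin x t j) - backMin x t 0 := by
  intro j hjt
  unfold runMax
  set K := backMin x t 0 with hK
  set v := min r (backMin x t j) with hv
  have hKv : K ≤ v := le_min hr1 (backMin_mono x (Nat.zero_le j) hjt)
  apply le_antisymm
  · -- upper bound
    apply Finset.sup'_le
    intro i hi
    rw [Finset.mem_range, Nat.lt_succ_iff] at hi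
    have hit : i ≤ t := hi.trans hjt
    have h1 : min r (backMin x t i) ≤ v :=
      min_le_min le_rfl (backMin_mono x hi hjt)
    have h2 : min r (backMin x t i) ≤ x i :=
      le_trans (min_le_right _ _) (backMin_le x t le_rfl hit)
    have : sr x t r i + K ≤ v - K := by
      simp only [sr, ← hK]
      linarith
    exact max_le this (by linarith)
  · -- lower bound
    rcases le_or_gt v K with hvK | hvK
    · calc v - K ≤ 0 := by linarith
        _ ≤ max (sr x t r 0 + K) 0 := le_max_right _ _
        _ ≤ _ := Finset.le_sup' (fun i => max (sr x t r i + K) 0)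
          (Finset.mem_range.mpr (Nat.succ_pos j))
    · -- there is some i ≤ j with x i ≤ v
      obtain ⟨i0, hi0mem, hi0⟩ := Finset.exists_mem_eq_inf'
        (Finset.nonempty_Icc.mpr (min_le_right 0 t)) x
      rw [Finset.mem_Icc] at hi0mem
      have hKi0 : x i0 = K := hi0.symm
      have hi0j : i0 ≤ j := by
        by_contra h
        push_neg at h
        have : backMin x t j ≤ x i0 := backMin_le x t h.le hi0mem.2
        have : v ≤ K := le_trans (min_le_right _ _) (hKi0 ▸ this)
        linarith
      set S := (Finset.range (j + 1)).filter (fun i => x i ≤ v) with hS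
      have hSne : S.Nonempty :=
        ⟨i0, Finset.mem_filter.mpr ⟨Finset.mem_range.mpr (Nat.lt_succ_of_le hi0j),
          by rw [hKi0]; linarith⟩⟩
      set m := S.max' hSne with hm
      have hmS : m ∈ S := S.max'_mem hSne
      rw [Finset.mem_filter, Finset.mem_range, Nat.lt_succ_iff] at hmS
      obtain ⟨hmj, hxm⟩ := hmS
      have hmt : m ≤ t := hmj.trans hjt
      have hgt : ∀ i, m < i → i ≤ j → v < x i := by
        intro i hmi hij
        by_contra h
        push_neg at h
        have : i ∈ S := Finset.mem_filter.mpr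
          ⟨Finset.mem_range.mpr (Nat.lt_succ_of_le hij), h⟩
        exact absurd (S.le_max' i this) (not_le.mpr hmi)
      have hxmv : x m = v := by
        rcases eq_or_lt_of_le hmj with heq | hlt
        · -- m = j : v ≤ K_j ≤ x j
          have : v ≤ x j := le_trans (min_le_right _ _) (backMin_le x t le_rfl hjt)
          rw [heq] at hxm ⊢
          exact le_antisymm hxm this
        · -- m < j : step bound
          have h1 : v < x (m + 1) := hgt (m + 1) (Nat.lt_succ_self m) hlt
          have hstep := hx.2 (m + 1) (Nat.succ_le_succ (Nat.zero_le m)) (hlt.trans_le hjt)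
          simp only [Nat.add_sub_cancel, Set.mem_insert_iff, Set.mem_singleton_iff] at hstep
          rcases hstep with h | h | h <;> omega
      -- v ≤ backMin x t m
      have hvKm : v ≤ backMin x t m := by
        apply le_backMin hmt
        intro k hk1 hk2
        rcases le_or_gt k j with hkj | hkj
        · rcases eq_or_lt_of_le hk1 with heq | hlt
          · rw [← heq, hxmv]
          · exact (hgt k hlt hkj).le
        · exact le_trans (min_le_right _ _) (backMin_le x t hkj.le hk2)
      have hvmin : v ≤ min r (backMin x t m) := le_min (min_le_left _ _) hvKm
      have : v - K ≤ max (sr x t r m + K) 0 := by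
        have : v - K ≤ sr x t r m + K := by
          simp only [sr, ← hK, hxmv]
          linarith
        exact this.trans (le_max_left _ _)
      exact this.trans (Finset.le_sup' (fun i => max (sr x t r i + K) 0)
        (Finset.mem_range.mpr (Nat.lt_succ_of_le hmj)))
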